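/- Let S = (W_1,...,W_k) be a minimum-length covering strategy for a tree T with paths P(W_i) and forests F(W_i) as in the structure lemma. Then for every pair j ≠ l, every vertex lying in both V(F(W_j)) and V(F(W_l)) lies in the union of the vertex sets of the paths P(W_1),...,P(W_k). -/

import Mathlib

open Finset

variable {V : Type*}

/-- The list of consecutive steps of a walk given as a list of vertices. -/
def wsteps (W : List V) : List (V × V) := W.zip W.tail

/-- A walk on a graph: a nonempty list of vertices in which consecutive
entries are equal or adjacent. -/
def IsWalk (G : SimpleGraph V) (W : List V) : Prop :=
  W ≠ [] ∧ ∀ p ∈ wsteps W, p.1 = p.2 ∨ G.Adj p.1 p.2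

/-- The length of a walk: the number of position-changing moves. -/
def wlen [DecidableEq V] (W : List V) : ℕ :=
  (wsteps W).countP (fun p => decide (p.1 ≠ p.2))

/-- The number of times a walk traverses the edge `{x, y}` (in either direction). -/
def trav [DecidableEq V] (W : List V) (x y : V) : ℕ :=
  (wsteps W).countP (fun p => decide ((p.1 = x ∧ p.2 = y) ∨ (p.1 = y ∧ p.2 = x)))

/-- The number of times a walk traverses the edge `(x, y)` from `x` to `y`. -/
def dirTrav [DecidableEq V] (W : List V) (x y : V) : ℕ :=
  (wsteps W).countP (fun p => decide (p.1 = x ∧ p.2 = y))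

/-- A tuple of walks covers the graph: every vertex appears in some walk. -/
def Covers {k : ℕ} (S : Fin k → List V) : Prop := ∀ v : V, ∃ i, v ∈ S i

/-- The total length of a strategy: the sum of the lengths of the walks. -/
def slen [DecidableEq V] {k : ℕ} (S : Fin k → List V) : ℕ := ∑ i, wlen (S i)

/-- A minimum-length covering strategy: a tuple of walks covering all vertices whose
total length is no larger than that of any covering strategy with the same starts. -/
def IsMinCover [DecidableEq V] (G : SimpleGraph V) {k : ℕ} (S : Fin k → List V) : Prop :=
  (∀ i, IsWalk G (S i)) ∧ Covers S ∧
    ∀ S' : Fin k → List V, (∀ i, IsWalk G (S' i)) → Covers S' →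
      (∀ i, (S' i).head? = (S i).head?) → slen S ≤ slen S'

/-- The forest of twice-traversed edges of walk W, as a subgraph of G. -/
def Fgraph [DecidableEq V] (G : SimpleGraph V) (W : List V) : SimpleGraph V :=
  SimpleGraph.fromRel (fun x y => G.Adj x y ∧ trav W x y = 2)

/-!
Suppose `v` lies on no path `P i`. Then no walk starts at `v`, and no walk traverses an edge at
`v` exactly once. Every edge of a tree is a bridge, so walk `l` enters `v` for the first time from
some neighbour `u`, performs a closed walk at `v`, and must return to `u` along the same edge.
Cutting this detour out of walk `l` and splicing the closed walk into walk `j`, which also visits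
`v`, gives a covering strategy with the same starting vertices and total length smaller by 2.
-/

lemma wsteps_cons_cons (a b : V) (L : List V) :
    wsteps (a :: b :: L) = (a, b) :: wsteps (b :: L) := rfl

lemma wsteps_append_of_getLast?_eq {A : List V} {a : V} (h : A.getLast? = some a)
    (B : List V) : wsteps (A ++ B) = wsteps A ++ wsteps (a :: B) := by
  induction A with
  | nil => simp at h
  | cons x A ih =>
    cases A with
    | nil =>
      obtain rfl : x = a := by simpa using h
      rfl
    | cons y A =>
      rw [List.cons_append, List.cons_append, wsteps_cons_cons, ← List.cons_append,
        ih (by simpa using h), wsteps_cons_cons, List.cons_append]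

lemma exists_eq_append_of_mem_wsteps {x y : V} {L : List V} (h : (x, y) ∈ wsteps L) :
    ∃ A B, L = A ++ x :: y :: B := by
  induction L with
  | nil => simp [wsteps] at h
  | cons a L ih =>
    cases L with
    | nil => simp [wsteps] at h
    | cons b L =>
      rw [wsteps_cons_cons, List.mem_cons, Prod.mk.injEq] at h
      rcases h with ⟨rfl, rfl⟩ | h
      · exact ⟨[], L, rfl⟩
      · obtain ⟨A, B, hL⟩ := ih h
        exact ⟨a :: A, B, by rw [hL, List.cons_append]⟩

lemma mem_of_mem_wsteps {p : V × V} {L : List V} (h : p ∈ wsteps L) : p.1 ∈ L ∧ p.2 ∈ L :=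
  ⟨(List.of_mem_zip h).1, List.mem_of_mem_tail (List.of_mem_zip h).2⟩

lemma exists_mem_wsteps_leaving {p : V → Prop} {L : List V} {a x : V}
    (ha : L.head? = some a) (hpa : p a) (hx : x ∈ L) (hpx : ¬ p x) :
    ∃ q ∈ wsteps L, p q.1 ∧ ¬ p q.2 := by
  induction L generalizing a with
  | nil => simp at hx
  | cons b L ih =>
    obtain rfl : b = a := by simpa using ha
    cases L with
    | nil =>
      obtain rfl : x = b := by simpa using hx
      exact absurd hpa hpx
    | cons c L =>
      rw [wsteps_cons_cons]
      by_cases hpc : p c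
      · have hxL : x ∈ c :: L := by
          rcases List.mem_cons.mp hx with rfl | hx
          · exact absurd hpa hpx
          · exact hx
        obtain ⟨q, hq, hq'⟩ := ih rfl hpc hxL
        exact ⟨q, List.mem_cons_of_mem _ hq, hq'⟩
      · exact ⟨(b, c), List.mem_cons_self, hpa, hpc⟩

lemma exists_loop_of_mem_wsteps {v u : V} {B : List V} (h : (v, u) ∈ wsteps (v :: B)) :
    ∃ C Y, B = C ++ u :: Y ∧ (v :: C).getLast? = some v := by
  obtain ⟨X, Y, hXY⟩ := exists_eq_append_of_mem_wsteps h
  cases X with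
  | nil => exact ⟨[], Y, by simpa using hXY, rfl⟩
  | cons x X =>
    obtain ⟨rfl, rfl⟩ := List.cons_eq_cons.mp hXY
    exact ⟨X ++ [v], Y, by simp, by rw [← List.cons_append, List.getLast?_concat]⟩

/-- The walk has to leave the component of `v` in `G - vu`, and can only do so along `v → u`. -/
lemma SimpleGraph.IsAcyclic.mem_wsteps_of_mem {G : SimpleGraph V} (hG : G.IsAcyclic)
    {L : List V} (hL : IsWalk G L) {u v : V} (hv : L.head? = some v) (hu : u ∈ L)
    (huv : G.Adj v u) : (v, u) ∈ wsteps L := by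
  set H := G.deleteEdges {s(v, u)}
  have hbridge : ¬ H.Reachable v u := isAcyclic_iff_forall_adj_isBridge.mp hG huv
  obtain ⟨⟨a, b⟩, hab, ha, hb⟩ :=
    exists_mem_wsteps_leaving (p := H.Reachable v) hv (.refl v) hu hbridge
  dsimp only at ha hb
  rcases hL.2 _ hab with hab' | hadj
  · obtain rfl : a = b := hab'
    exact absurd ha hb
  by_cases he : s(a, b) = s(v, u)
  · rcases Sym2.eq_iff.mp he with ⟨rfl, rfl⟩ | ⟨rfl, rfl⟩
    · exact hab
    · exact absurd ha hbridge
  · exact absurd (ha.trans (SimpleGraph.Adj.reachable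
      (SimpleGraph.deleteEdges_adj.mpr ⟨hadj, he⟩))) hb

section Traversals

variable [DecidableEq V]

lemma trav_append_of_getLast?_eq {A : List V} {a : V} (h : A.getLast? = some a)
    (B : List V) (x y : V) : trav (A ++ B) x y = trav A x y + trav (a :: B) x y := by
  rw [trav, wsteps_append_of_getLast?_eq h, List.countP_append, trav, trav]

lemma trav_comm (W : List V) (x y : V) : trav W x y = trav W y x := by
  unfold trav
  congr 1
  ext p
  simp only [decide_eq_decide]
  tauto

lemma trav_eq_zero_of_not_mem {W : List V} {x : V} (hx : x ∉ W) (y : V) :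
    trav W x y = 0 := by
  refine List.countP_eq_zero.mpr fun p hp => ?_
  have := mem_of_mem_wsteps hp
  simp only [decide_eq_true_eq]
  rintro (⟨rfl, -⟩ | ⟨-, rfl⟩)
  exacts [hx this.1, hx this.2]

lemma mem_of_trav_ne_zero {W : List V} {x y : V} (h : trav W x y ≠ 0) : x ∈ W := by
  by_contra hx
  exact h (trav_eq_zero_of_not_mem hx y)

lemma mem_of_fgraph_adj {G : SimpleGraph V} {W : List V} {v w : V}
    (h : (Fgraph G W).Adj v w) : v ∈ W := by
  rcases (SimpleGraph.fromRel_adj _ _ _).mp h with ⟨-, ⟨-, h⟩ | ⟨-, h⟩⟩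
  · exact mem_of_trav_ne_zero (y := w) (by omega)
  · exact mem_of_trav_ne_zero (x := v) (y := w) (by rw [trav_comm]; omega)

end Traversals

section Strategies

variable [DecidableEq V] {G : SimpleGraph V}

lemma SimpleGraph.IsAcyclic.exists_detour (hG : G.IsAcyclic) {W : List V} (hW : IsWalk G W)
    {v : V} (hv : v ∈ W) (hhead : W.head? ≠ some v)
    (htrav : ∀ u, G.Adj u v → trav W u v ≠ 1) :
    ∃ A C Y u, W = A ++ v :: (C ++ u :: Y) ∧ A.getLast? = some u ∧ u ≠ v ∧
      (v :: C).getLast? = some v := by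
  obtain ⟨A, B, rfl, hvA⟩ := List.eq_append_cons_of_mem hv
  obtain ⟨u, hu⟩ : ∃ u, A.getLast? = some u := by
    cases A with
    | nil => exact absurd rfl hhead
    | cons a A => exact ⟨_, List.getLast?_eq_some_getLast (List.cons_ne_nil a A)⟩
  have huv : u ≠ v := fun h => hvA (h ▸ List.mem_of_getLast? hu)
  have hsteps : wsteps (A ++ v :: B) = wsteps A ++ (u, v) :: wsteps (v :: B) :=
    wsteps_append_of_getLast?_eq hu _
  have hadj : G.Adj u v := (hW.2 (u, v) (by simp [hsteps])).resolve_left huv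
  have hback : (v, u) ∈ wsteps (v :: B) := by
    by_contra hnot
    have hvB : IsWalk G (v :: B) :=
      ⟨List.cons_ne_nil _ _, fun p hp => hW.2 p (by simp [hsteps, hp])⟩
    have huB : u ∉ v :: B := fun huB => hnot (hG.mem_wsteps_of_mem hvB rfl huB hadj.symm)
    apply htrav u hadj
    rw [trav_append_of_getLast?_eq hu, trav_comm A, trav_eq_zero_of_not_mem hvA, trav,
      wsteps_cons_cons, List.countP_cons, ← trav, trav_eq_zero_of_not_mem huB]
    simp
  obtain ⟨C, Y, rfl, hC⟩ := exists_loop_of_mem_wsteps hback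
  exact ⟨A, C, Y, u, rfl, hu, huv, hC⟩

variable {k : ℕ} {S : Fin k → List V}

lemma IsMinCover.wlen_add_wlen_le (hS : IsMinCover G S) {j l : Fin k} (hjl : j ≠ l)
    {Wj Wl : List V} (hWj : IsWalk G Wj) (hWl : IsWalk G Wl)
    (hcov : ∀ x, x ∈ S j ∨ x ∈ S l → x ∈ Wj ∨ x ∈ Wl)
    (hj : Wj.head? = (S j).head?) (hl : Wl.head? = (S l).head?) :
    wlen (S j) + wlen (S l) ≤ wlen Wj + wlen Wl := by
  set S' := Function.update (Function.update S l Wl) j Wj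
  have hS'j : S' j = Wj := Function.update_self ..
  have hS'l : S' l = Wl := by simp [S', hjl.symm]
  have hS' : ∀ i, i ≠ j → i ≠ l → S' i = S i := fun i hij hil => by simp [S', hij, hil]
  have hle : slen S ≤ slen S' := by
    refine hS.2.2 S' (fun i => ?_) (fun x => ?_) (fun i => ?_)
    · by_cases hij : i = j
      · exact hij ▸ hS'j ▸ hWj
      by_cases hil : i = l
      · exact hil ▸ hS'l ▸ hWl
      exact hS' i hij hil ▸ hS.1 i
    · obtain ⟨i, hx⟩ := hS.2.1 x
      by_cases hijl : i = j ∨ i = l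
      · rcases hcov x (by rcases hijl with rfl | rfl <;> simp [hx]) with h | h
        exacts [⟨j, hS'j ▸ h⟩, ⟨l, hS'l ▸ h⟩]
      · push Not at hijl
        exact ⟨i, (hS' i hijl.1 hijl.2).symm ▸ hx⟩
    · by_cases hij : i = j
      · exact hij ▸ hS'j ▸ hj
      by_cases hil : i = l
      · exact hil ▸ hS'l ▸ hl
      rw [hS' i hij hil]
  have hdiff : ∑ i, ((wlen (S i) : ℤ) - wlen (S' i)) =
      (wlen (S j) - wlen Wj) + (wlen (S l) - wlen Wl) := by
    rw [Fintype.sum_eq_add j l hjl (fun i ⟨hij, hil⟩ => by simp [hS' i hij hil]), hS'j, hS'l]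
  rw [Finset.sum_sub_distrib, ← Nat.cast_sum, ← Nat.cast_sum] at hdiff
  simp only [slen] at hle
  omega

/-- Moving the loop at `v` from `S l` into `S j` saves the two traversals of `uv`. -/
lemma IsMinCover.ne_detour (hS : IsMinCover G S) {j l : Fin k} (hjl : j ≠ l) {v u : V}
    (hvj : v ∈ S j) {A C Y : List V} (hA : A.getLast? = some u) (huv : u ≠ v)
    (hC : (v :: C).getLast? = some v) : S l ≠ A ++ v :: (C ++ u :: Y) := by
  intro hSl
  obtain ⟨E, F, hSj⟩ := List.append_of_mem hvj
  have hEv : (E ++ [v]).getLast? = some v := List.getLast?_concat ..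
  have hl : wsteps (S l) =
      wsteps A ++ (u, v) :: (wsteps (v :: C) ++ (v, u) :: wsteps (u :: Y)) := by
    rw [hSl, wsteps_append_of_getLast?_eq hA, wsteps_cons_cons, ← List.cons_append,
      wsteps_append_of_getLast?_eq hC, wsteps_cons_cons]
  have hl' : wsteps (A ++ Y) = wsteps A ++ wsteps (u :: Y) := wsteps_append_of_getLast?_eq hA Y
  have hj : wsteps (S j) = wsteps (E ++ [v]) ++ wsteps (v :: F) := by
    rw [hSj, List.append_cons, wsteps_append_of_getLast?_eq hEv]
  have hj' : wsteps (E ++ v :: (C ++ F)) =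
      wsteps (E ++ [v]) ++ (wsteps (v :: C) ++ wsteps (v :: F)) := by
    rw [List.append_cons, wsteps_append_of_getLast?_eq hEv, ← List.cons_append,
      wsteps_append_of_getLast?_eq hC]
  have hAne : A ≠ [] := by rintro rfl; simp at hA
  have hle := hS.wlen_add_wlen_le hjl (Wj := E ++ v :: (C ++ F)) (Wl := A ++ Y) ?_ ?_ ?_ ?_ ?_
  · simp only [wlen, hj, hj', hl, hl', List.countP_append, List.countP_cons] at hle
    simp [huv, huv.symm] at hle
    omega
  · refine ⟨by simp, fun p hp => ?_⟩
    rw [hj', List.mem_append, List.mem_append] at hp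
    rcases hp with hp | hp | hp
    · exact (hS.1 j).2 p (by rw [hj]; exact List.mem_append_left _ hp)
    · exact (hS.1 l).2 p (by rw [hl]; simp [hp])
    · exact (hS.1 j).2 p (by rw [hj]; exact List.mem_append_right _ hp)
  · refine ⟨by simp [hAne], fun p hp => (hS.1 l).2 p ?_⟩
    rw [hl', List.mem_append] at hp
    rw [hl]
    rcases hp with hp | hp <;> simp [hp]
  · have huA : u ∈ A := List.mem_of_getLast? hA
    rw [hSj, hSl]
    intro x
    simp only [List.mem_append, List.mem_cons]
    grind
  · rw [hSj]
    cases E <;> rfl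
  · rw [hSl]
    cases A with
    | nil => exact absurd rfl hAne
    | cons a A => rfl

end Strategies

theorem stmt5_general {V : Type*} [DecidableEq V] (G : SimpleGraph V) (hT : G.IsTree)
    {k : ℕ} (S P : Fin k → List V) (hS : IsMinCover G S)
    (hP : ∀ i, (P i).Nodup ∧ (P i).Chain' G.Adj ∧ (P i).head? = (S i).head? ∧
      (∀ x ∈ P i, x ∈ S i) ∧
      ∀ x y : V, G.Adj x y → (trav (S i) x y = 1 ↔ trav (P i) x y = 1))
    (j l : Fin k) (hjl : j ≠ l) (v : V)
    (hvj : ∃ w, (Fgraph G (S j)).Adj v w) (hvl : ∃ w, (Fgraph G (S l)).Adj v w) :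
    ∃ i : Fin k, v ∈ P i := by
  by_contra! hvP
  obtain ⟨_, hvj⟩ := hvj
  obtain ⟨_, hvl⟩ := hvl
  obtain ⟨-, -, hhead, -, htrav⟩ := hP l
  have hvl_head : (S l).head? ≠ some v := fun h =>
    hvP l (List.mem_of_mem_head? (by rw [hhead, h]; rfl))
  have hvl_trav : ∀ u, G.Adj u v → trav (S l) u v ≠ 1 := fun u hu h =>
    hvP l (mem_of_trav_ne_zero (y := u)
      (by rw [trav_comm, (htrav u v hu).mp h]; exact one_ne_zero))
  obtain ⟨A, C, Y, u, hSl, hA, huv, hC⟩ := hT.isAcyclic.exists_detour (hS.1 l)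
    (mem_of_fgraph_adj hvl) hvl_head hvl_trav
  exact hS.ne_detour hjl (mem_of_fgraph_adj hvj) hA huv hC hSl

/-- Structure lemma (part (d)): for j ≠ l, any vertex lying in both forests
F(W_j) and F(W_l) lies on the union of the paths P(W₁),…,P(Wₖ). -/
theorem stmt5 {V : Type*} [Fintype V] [DecidableEq V] (G : SimpleGraph V) (hT : G.IsTree)
    {k : ℕ} (S P : Fin k → List V) (hS : IsMinCover G S)
    (hP : ∀ i, (P i).Nodup ∧ (P i).Chain' G.Adj ∧ (P i).head? = (S i).head? ∧
      (∀ x ∈ P i, x ∈ S i) ∧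
      ∀ x y : V, G.Adj x y → (trav (S i) x y = 1 ↔ trav (P i) x y = 1))
    (j l : Fin k) (hjl : j ≠ l) (v : V)
    (hvj : ∃ w, (Fgraph G (S j)).Adj v w) (hvl : ∃ w, (Fgraph G (S l)).Adj v w) :
    ∃ i : Fin k, v ∈ P i :=
  stmt5_general G hT S P hS hP j l hjl v hvj hvl
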